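/- Every atomic Puiseux monoid M admits a numerical approximation: there is a sequence (N_i)_{i≥1} of finitely generated atomic submonoids of M with N_i ⊆ N_{i+1}, A(N_i) ⊆ A(N_{i+1}), and M = ∪_{i≥1} N_i, where each N_i is isomorphic to a numerical monoid (or finite cyclic generation) when M is nontrivial. (It suffices to show: if a₁, a₂, … enumerates A(M), then N_i := ⟨a₁, …, a_i⟩ satisfies A(N_i) ⊆ A(N_{i+1}) and ∪ N_i = M.) -/

import Mathlib

open scoped NNRat ENNReal

/-- The set of atoms of a Puiseux monoid (additive submonoid of `ℚ≥0`). -/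
def PMatoms (M : AddSubmonoid ℚ≥0) : Set ℚ≥0 :=
  {a | a ∈ M ∧ a ≠ 0 ∧ ∀ y ∈ M, ∀ z ∈ M, y ≠ 0 → z ≠ 0 → a ≠ y + z}

/-- A Puiseux monoid is atomic if it is generated by its atoms. -/
def PMatomic (M : AddSubmonoid ℚ≥0) : Prop :=
  ∀ x ∈ M, x ∈ AddSubmonoid.closure (PMatoms M)

/-- The set of factorizations of `x` in `M`: multisets of atoms summing to `x`. -/
def PMfactorizations (M : AddSubmonoid ℚ≥0) (x : ℚ≥0) : Set (Multiset ℚ≥0) :=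
  {s | (∀ a ∈ s, a ∈ PMatoms M) ∧ s.sum = x}

/-- The set of lengths of `x` in `M`. -/
def PMlengths (M : AddSubmonoid ℚ≥0) (x : ℚ≥0) : Set ℕ :=
  Multiset.card '' PMfactorizations M x

/-- The elasticity of an element: `sup L(x) / inf L(x)` in `ℝ≥0∞`, `1` for `x = 0`. -/
noncomputable def PMelasticityOf (M : AddSubmonoid ℚ≥0) (x : ℚ≥0) : ℝ≥0∞ :=
  if x = 0 then 1
  else sSup ((fun n : ℕ => (n : ℝ≥0∞)) '' PMlengths M x) /
       sInf ((fun n : ℕ => (n : ℝ≥0∞)) '' PMlengths M x)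

/-- The elasticity of a Puiseux monoid. -/
noncomputable def PMelasticity (M : AddSubmonoid ℚ≥0) : ℝ≥0∞ :=
  ⨆ x ∈ M, PMelasticityOf M x

/-- The union of sets of lengths containing `n`. -/
def PMunionOfLengths (M : AddSubmonoid ℚ≥0) (n : ℕ) : Set ℕ :=
  {m | ∃ x : ℚ≥0, n ∈ PMlengths M x ∧ m ∈ PMlengths M x}

/-- The `n`-th local elasticity `ρ_n(M) = sup U_n(M)` in `ℝ≥0∞`. -/
noncomputable def PMlocalElasticity (M : AddSubmonoid ℚ≥0) (n : ℕ) : ℝ≥0∞ :=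
  sSup ((fun m : ℕ => (m : ℝ≥0∞)) '' PMunionOfLengths M n)

/-- The set of distances of an element `x` of `M`. -/
def PMdistances (M : AddSubmonoid ℚ≥0) (x : ℚ≥0) : Set ℕ :=
  {d | 0 < d ∧ ∃ l ∈ PMlengths M x,
    PMlengths M x ∩ Set.Icc l (l + d) = {l, l + d}}

/-- The set of distances (delta set) of `M`. -/
def PMDelta (M : AddSubmonoid ℚ≥0) : Set ℕ :=
  ⋃ x ∈ {y : ℚ≥0 | y ∈ M ∧ y ≠ 0}, PMdistances M x

/-- `(Mi)` is an approximation of `M`: an increasing sequence of atomic submonoids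
with union `M` and increasing sets of atoms. -/
def PMapprox (M : AddSubmonoid ℚ≥0) (Mi : ℕ → AddSubmonoid ℚ≥0) : Prop :=
  (∀ i, Mi i ≤ Mi (i + 1)) ∧ (∀ i, PMatomic (Mi i)) ∧
  (∀ i, PMatoms (Mi i) ⊆ PMatoms (Mi (i + 1))) ∧
  (∀ x, x ∈ M ↔ ∃ i, x ∈ Mi i)

/-
An atom of `M` cannot be split in `M`, so a fortiori not in any submonoid containing it; hence
every generator `aₖ` is an atom of `Nᵢ = ⟨a₀, …, aᵢ⟩` for `k ≤ i`. Conversely a sum of two or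
more of these generators is not an atom, so `A(Nᵢ) = {a₀, …, aᵢ}`, which is increasing in `i`
and generates `Nᵢ`. Finally `M = ⟨A(M)⟩` is the directed union of the `Nᵢ`.
-/

lemma mem_PMatoms_of_le {M N : AddSubmonoid ℚ≥0} (hNM : N ≤ M) {x : ℚ≥0}
    (hx : x ∈ PMatoms M) (hxN : x ∈ N) : x ∈ PMatoms N :=
  ⟨hxN, hx.2.1, fun y hy z hz hy0 hz0 => hx.2.2 y (hNM hy) z (hNM hz) hy0 hz0⟩

lemma PMatoms_closure_subset {M : AddSubmonoid ℚ≥0} {S : Set ℚ≥0} (hS : S ⊆ PMatoms M) :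
    PMatoms (AddSubmonoid.closure S) ⊆ S := by
  intro x hx
  obtain ⟨l, hlS, rfl⟩ := AddSubmonoid.exists_multiset_of_mem_closure hx.1
  have hl0 : ∀ y ∈ l, y ≠ 0 := fun y hy => (hS (hlS y hy)).2.1
  obtain rfl | ⟨y, hy⟩ := l.empty_or_exists_mem
  · exact absurd Multiset.sum_zero hx.2.1
  obtain ⟨t, rfl⟩ := Multiset.exists_cons_of_mem hy
  obtain rfl | ⟨z, hz⟩ := t.empty_or_exists_mem
  · simpa using hlS y hy
  have ht0 : t.sum ≠ 0 := fun h =>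
    hl0 z (Multiset.mem_cons_of_mem hz) (Multiset.sum_eq_zero_iff.mp h z hz)
  have htS : t.sum ∈ AddSubmonoid.closure S := AddSubmonoid.multiset_sum_mem _ t
    fun z hz => AddSubmonoid.subset_closure (hlS z (Multiset.mem_cons_of_mem hz))
  exact absurd (Multiset.sum_cons y t) <| hx.2.2 y (AddSubmonoid.subset_closure (hlS y hy))
    t.sum htS (hl0 y hy) ht0

lemma PMatoms_closure_of_subset {M : AddSubmonoid ℚ≥0} {S : Set ℚ≥0} (hS : S ⊆ PMatoms M) :
    PMatoms (AddSubmonoid.closure S) = S := by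
  refine (PMatoms_closure_subset hS).antisymm fun x hx => ?_
  have hSM : AddSubmonoid.closure S ≤ M := AddSubmonoid.closure_le.mpr fun y hy => (hS hy).1
  exact mem_PMatoms_of_le hSM (hS hx) (AddSubmonoid.subset_closure hx)

lemma PMatomic_closure_of_subset {M : AddSubmonoid ℚ≥0} {S : Set ℚ≥0} (hS : S ⊆ PMatoms M) :
    PMatomic (AddSubmonoid.closure S) := fun _ hx => by
  rwa [PMatoms_closure_of_subset hS]

lemma AddSubmonoid.mem_closure_range_iff_exists_image_Iic {A : Type*} [AddMonoid A]
    (a : ℕ → A) (x : A) :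
    x ∈ AddSubmonoid.closure (Set.range a) ↔
      ∃ i, x ∈ AddSubmonoid.closure (a '' Set.Iic i) := by
  have hmono : Monotone fun i => AddSubmonoid.closure (a '' Set.Iic i) := fun _ _ hij =>
    AddSubmonoid.closure_mono (Set.image_mono (Set.Iic_subset_Iic.mpr hij))
  have hrange : Set.range a = ⋃ i, a '' Set.Iic i := by
    rw [← Set.image_iUnion, Set.iUnion_Iic, Set.image_univ]
  rw [hrange, AddSubmonoid.closure_iUnion, AddSubmonoid.mem_iSup_of_directed hmono.directed_le]

theorem stmt19 (M : AddSubmonoid ℚ≥0) (hM : PMatomic M)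
    (a : ℕ → ℚ≥0) (ha : Set.range a = PMatoms M) :
    PMapprox M (fun i => AddSubmonoid.closure (a '' Set.Iic i)) := by
  have hmono : Monotone fun i => a '' Set.Iic i := fun _ _ hij =>
    Set.image_mono (Set.Iic_subset_Iic.mpr hij)
  have hatoms : ∀ i, a '' Set.Iic i ⊆ PMatoms M := fun i =>
    ha ▸ Set.image_subset_range a _
  refine ⟨fun i => AddSubmonoid.closure_mono (hmono i.le_succ),
    fun i => PMatomic_closure_of_subset (hatoms i), fun i => ?_, fun x => ?_⟩
  · rw [PMatoms_closure_of_subset (hatoms i), PMatoms_closure_of_subset (hatoms (i + 1))]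
    exact hmono i.le_succ
  · rw [← AddSubmonoid.mem_closure_range_iff_exists_image_Iic, ha]
    exact ⟨hM x, fun hx => AddSubmonoid.closure_le.mpr (fun y hy => hy.1) hx⟩
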